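/- arXiv:math/0307104 — 2 statements merged into one kernel-verified Lean document; each statement's English description precedes it below -/
import Mathlib

section
/- For every n : ℕ and every finite sequence m₀, m₁, ..., mₙ of natural numbers, the set of pairs (b, c) of natural numbers such that β(b, c, i) = mᵢ for all i ≤ n is infinite. -/
/-- Gödel's β-function: `β b c i = b mod (c·(i+1) + 1)`. -/
def godelBeta (b c i : ℕ) : ℕ := b % (c * (i + 1) + 1)

lemma beta_coprime {c i j n : ℕ} (hij : i < j) (hj : j ≤ n) (hc : n.factorial ∣ c) :
    Nat.Coprime (c * (i + 1) + 1) (c * (j + 1) + 1) := by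
  by_contra h
  obtain ⟨p, pp, pdvd⟩ := Nat.exists_prime_and_dvd h
  have ha : p ∣ c * (i + 1) + 1 := pdvd.trans (Nat.gcd_dvd_left _ _)
  have hb : p ∣ c * (j + 1) + 1 := pdvd.trans (Nat.gcd_dvd_right _ _)
  have hpc : ¬ p ∣ c := by
    intro hpc
    have h1 : p ∣ 1 := (Nat.dvd_add_right (hpc.mul_right (i + 1))).mp ha
    exact pp.one_lt.ne' (Nat.dvd_one.mp h1)
  have key : c * (j + 1) + 1 = c * (i + 1) + 1 + c * (j - i) := by
    have h2 : (i + 1) + (j - i) = j + 1 := by omega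
    rw [add_right_comm, ← Nat.mul_add, h2]
  have h3 : p ∣ c * (j - i) := (Nat.dvd_add_right ha).mp (key ▸ hb)
  rcases pp.dvd_mul.mp h3 with h4 | h4
  · exact hpc h4
  · exact hpc ((h4.trans (Nat.dvd_factorial (by omega) (by omega))).trans hc)

/-- The set of pairs `(b, c)` whose β-function represents a given finite sequence
`m₀, …, mₙ` is infinite. -/
theorem beta_representing_pairs_infinite (n : ℕ) (m : ℕ → ℕ) :
    {p : ℕ × ℕ | ∀ i ≤ n, godelBeta p.1 p.2 i = m i}.Infinite := by
  set M : ℕ := (Finset.range (n + 1)).sup m + n + 1 with hM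
  have hmM : ∀ i ≤ n, m i ≤ M := fun i hi => by
    have := Finset.le_sup (f := m) (Finset.mem_range.mpr (by omega : i < n + 1))
    omega
  -- for each k, there is a pair in the set with second component (k + M)!
  have hex : ∀ k : ℕ, ∃ p : ℕ × ℕ,
      (∀ i ≤ n, godelBeta p.1 p.2 i = m i) ∧ p.2 = (k + M).factorial := by
    intro k
    set c : ℕ := (k + M).factorial with hc
    have hfac : n.factorial ∣ c := Nat.factorial_dvd_factorial (by omega)
    have hcM : M ≤ c := le_trans (Nat.self_le_factorial _)
      (Nat.factorial_le (by omega))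
    have co : (List.range (n + 1)).Pairwise
        (Function.onFun Nat.Coprime fun i => c * (i + 1) + 1) := by
      refine (List.pairwise_lt_range (n := _)).imp_of_mem ?_
      intro i j hi hj hij
      exact beta_coprime hij (Nat.lt_succ_iff.mp (List.mem_range.mp hj)) hfac
    obtain ⟨b, hb⟩ := Nat.chineseRemainderOfList m (fun i => c * (i + 1) + 1)
      (List.range (n + 1)) co
    refine ⟨(b, c), fun i hi => ?_, rfl⟩
    have hbi := hb i (List.mem_range.mpr (by omega))
    have hlt : m i < c * (i + 1) + 1 := by
      have h1 : m i ≤ M := hmM i hi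
      have h2 : c ≤ c * (i + 1) := Nat.le_mul_of_pos_right _ (by omega)
      omega
    simpa [godelBeta, Nat.ModEq, Nat.mod_eq_of_lt hlt] using hbi
  choose f hf hf2 using hex
  refine Set.infinite_of_injective_forall_mem (f := f) ?_ hf
  intro a b hab
  have : (a + M).factorial = (b + M).factorial := by rw [← hf2 a, ← hf2 b, hab]
  by_contra hne
  rcases Nat.lt_or_ge a b with h | h
  · exact absurd this (Nat.ne_of_lt ((Nat.factorial_lt (by omega)).mpr (by omega)))
  · exact absurd this.symm (Nat.ne_of_lt ((Nat.factorial_lt (by omega)).mpr (by omega)))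
end

section
/- Let σ be a type of machine configurations, let f : σ → Option σ be a step function, and let s : σ. Suppose there exist indices i < j and a finite run c₀, c₁, ..., c_j of configurations with c₀ = s, f(cₜ) = some(c_{t+1}) for every t < j, and c_i = c_j (an instantaneous description repeats itself). Then the evaluation eval f s diverges, i.e. (Turing.eval f s).Dom is false. -/
/-- Loop detection: if a run of the step function `f` from `s` repeats an
instantaneous description (`c i = c j` with `i < j`), then `Turing.eval f s`
diverges. -/
theorem eval_diverges_of_repeating_configuration {σ : Type*} (f : σ → Option σ) (s : σ)
    (h : ∃ (i j : ℕ) (c : ℕ → σ), i < j ∧ c 0 = s ∧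
      (∀ t < j, f (c t) = some (c (t + 1))) ∧ c i = c j) :
    ¬ (StateTransition.eval f s).Dom := by
  obtain ⟨i, j, c, hij, hc0, hstep, hcij⟩ := h
  -- infinite run obtained by following `f` (with a dummy fallback)
  set g : ℕ → σ := fun t => Nat.rec s (fun _ x => (f x).getD x) t with hg
  have hg0 : g 0 = s := rfl
  have hgsucc : ∀ t, g (t + 1) = (f (g t)).getD (g t) := fun t => rfl
  -- invariant: every `g t` equals some `c u` with `u < j`
  have hinv : ∀ t, ∃ u, u < j ∧ g t = c u := by
    intro t
    induction t with
    | zero => exact ⟨0, Nat.lt_of_le_of_lt (Nat.zero_le i) hij, by rw [hg0, hc0]⟩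
    | succ t ih =>
      obtain ⟨u, hu, hgu⟩ := ih
      have hf : f (g t) = some (c (u + 1)) := by rw [hgu]; exact hstep u hu
      have hgs : g (t + 1) = c (u + 1) := by rw [hgsucc, hf]; rfl
      rcases lt_or_eq_of_le (Nat.succ_le_of_lt hu) with h' | h'
      · exact ⟨u + 1, h', hgs⟩
      · exact ⟨i, hij, by rw [hgs]; simp only [← Nat.succ_eq_add_one, h']; exact hcij.symm⟩
  have hgstep : ∀ t, f (g t) = some (g (t + 1)) := by
    intro t
    obtain ⟨u, hu, hgu⟩ := hinv t
    have hf : f (g t) = some (c (u + 1)) := by rw [hgu]; exact hstep u hu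
    rw [hf, hgsucc, hf]; rfl
  intro hdom
  have hb : (StateTransition.eval f s).get hdom ∈ StateTransition.eval f s := Part.get_mem hdom
  have key : ¬∃ t, g t = s := by
    refine StateTransition.evalInduction (C := fun a => ¬∃ t, g t = a) hb ?_
    rintro a _ ih ⟨t, rfl⟩
    exact ih (g (t + 1)) (hgstep t) ⟨t + 1, rfl⟩
  exact key ⟨0, hg0⟩
end
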